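/- arXiv:1706.04745 — 2 statements merged into one kernel-verified Lean document; each statement's English description precedes it below -/
import Mathlib

section
/- Let α < 0, β ∈ ℝ², and let γ be a symmetric negative definite 2×2 real matrix, with the ellipticity estimate (β·ξ')² − 4α(γξ')·ξ' < −c|ξ'|² for all real ξ' ≠ 0 and some c > 0. Then there exists μ > 0 such that for all (ξ',η) ∈ ℂ²×ℂ satisfying Im η < μ(|Re η| + |Re ξ'|²) − μ^{−1}|Im ξ'|², the complex number (β·ξ')² − 4α(γξ')·ξ' + 4αiη does not lie in the real interval [0,∞). -/
open Complex

lemma two_mul_abs_bound (g x y : ℝ) :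
    2*(g*(x*y)) ≤ |g| *(x^2+y^2) ∧ -(|g| *(x^2+y^2)) ≤ 2*(g*(x*y)) := by
  constructor <;>
  linarith [mul_nonneg (sub_nonneg.mpr (le_abs_self g)) (sq_nonneg (x+y)),
    mul_nonneg (sub_nonneg.mpr (le_abs_self g)) (sq_nonneg (x-y)),
    mul_nonneg (sub_nonneg.mpr (neg_abs_le g)) (sq_nonneg (x+y)),
    mul_nonneg (sub_nonneg.mpr (neg_abs_le g)) (sq_nonneg (x-y))]

/-- Claim 1 of the paper: for a strongly elliptic principal symbol with `α < 0`,
`γ` symmetric negative definite and the ellipticity estimate, there is `μ > 0`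
such that `(β·ξ')² − 4α(γξ')·ξ' + 4αiη ∉ [0,∞)` for all `(ξ',η) ∈ L²_μ`. -/
theorem symbol_avoids_nonnegative_axis
    (α : ℝ) (hα : α < 0) (β : Fin 2 → ℝ) (γ : Matrix (Fin 2) (Fin 2) ℝ)
    (hsym : γ.IsSymm)
    (hneg : ∀ ξ : Fin 2 → ℝ, ξ ≠ 0 → (∑ i, ∑ j, γ i j * ξ i * ξ j) < 0)
    (c : ℝ) (hc : 0 < c)
    (hell : ∀ ξ : Fin 2 → ℝ, ξ ≠ 0 →
      (∑ i, β i * ξ i) ^ 2 - 4 * α * (∑ i, ∑ j, γ i j * ξ i * ξ j)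
        < -c * (∑ i, ξ i ^ 2)) :
    ∃ μ : ℝ, 0 < μ ∧ ∀ (ξ : Fin 2 → ℂ) (η : ℂ),
      η.im < μ * (|η.re| + ∑ i, (ξ i).re ^ 2) - μ⁻¹ * ∑ i, (ξ i).im ^ 2 →
      ∀ r : ℝ, 0 ≤ r →
        (∑ i, (β i : ℂ) * ξ i) ^ 2
            - 4 * (α : ℂ) * (∑ i, ∑ j, (γ i j : ℂ) * ξ i * ξ j)
            + 4 * (α : ℂ) * Complex.I * η ≠ (r : ℂ) := by
  have hγ10 : γ 1 0 = γ 0 1 := hsym.apply 0 1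
  have hA4 : (0:ℝ) < -(4*α) := by linarith
  have hg0 : (0:ℝ) ≤ |γ 0 0| := abs_nonneg _
  have hg1 : (0:ℝ) ≤ |γ 0 1| := abs_nonneg _
  have hg2 : (0:ℝ) ≤ |γ 1 1| := abs_nonneg _
  have hBq : (0:ℝ) ≤ (β 0)^2 + (β 1)^2 := by positivity
  have hGpos : (0:ℝ) < |γ 0 0| + 2*|γ 0 1| + |γ 1 1| + 1 := by linarith
  have hDpos : (0:ℝ) < (β 0)^2 + (β 1)^2
      + (-(4*α))*(|γ 0 0| + 2*|γ 0 1| + |γ 1 1| + 1) := by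
    nlinarith [mul_pos hA4 hGpos]
  have hS1 : (0:ℝ) < ((β 0)^2 + (β 1)^2
      + (-(4*α))*(|γ 0 0| + 2*|γ 0 1| + |γ 1 1| + 1)) + (-(4*α)) := by linarith
  have hS2 : (0:ℝ) < (-(4*α))*(|γ 0 0| + 2*|γ 0 1| + |γ 1 1| + 1)
      + ((β 0)^2 + (β 1)^2 + (-(4*α))*(|γ 0 0| + 2*|γ 0 1| + |γ 1 1| + 1)) := by
    nlinarith
  -- ellipticity in coordinates (non-strict, valid also at zero)
  have hell' : ∀ x0 x1 : ℝ,
      (β 0 * x0 + β 1 * x1)^2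
        - 4*α*(γ 0 0 * x0 * x0 + γ 0 1 * x0 * x1 + γ 0 1 * x1 * x0 + γ 1 1 * x1 * x1)
        ≤ -c*(x0^2 + x1^2) := by
    intro x0 x1
    by_cases hz : x0 = 0 ∧ x1 = 0
    · obtain ⟨h0, h1⟩ := hz
      simp [h0, h1]
    · have hne : (![x0, x1] : Fin 2 → ℝ) ≠ 0 := by
        intro hzz
        exact hz ⟨congrFun hzz 0, congrFun hzz 1⟩
      have hthis := hell ![x0, x1] hne
      simp only [Fin.sum_univ_two, Matrix.cons_val_zero, Matrix.cons_val_one,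
        Matrix.head_cons] at hthis
      rw [hγ10] at hthis
      linarith
  set μ := min 1 (min
      (c / (((β 0)^2 + (β 1)^2 + (-(4*α))*(|γ 0 0| + 2*|γ 0 1| + |γ 1 1| + 1)) + (-(4*α))))
      ((-(4*α)) / ((-(4*α))*(|γ 0 0| + 2*|γ 0 1| + |γ 1 1| + 1)
        + ((β 0)^2 + (β 1)^2 + (-(4*α))*(|γ 0 0| + 2*|γ 0 1| + |γ 1 1| + 1))))) with hμdef
  have hμpos : 0 < μ := lt_min one_pos (lt_min (div_pos hc hS1) (div_pos hA4 hS2))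
  have hμ1 : μ ≤ 1 := min_le_left _ _
  have hμ2 : μ * (((β 0)^2 + (β 1)^2
      + (-(4*α))*(|γ 0 0| + 2*|γ 0 1| + |γ 1 1| + 1)) + (-(4*α))) ≤ c :=
    (le_div_iff₀ hS1).mp (le_trans (min_le_right _ _) (min_le_left _ _))
  have hμ3 : μ * ((-(4*α))*(|γ 0 0| + 2*|γ 0 1| + |γ 1 1| + 1)
      + ((β 0)^2 + (β 1)^2 + (-(4*α))*(|γ 0 0| + 2*|γ 0 1| + |γ 1 1| + 1))) ≤ -(4*α) :=
    (le_div_iff₀ hS2).mp (le_trans (min_le_right _ _) (min_le_right _ _))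
  refine ⟨μ, hμpos, ?_⟩
  intro ξ η h r hr heq
  have hre := congrArg Complex.re heq
  have him := congrArg Complex.im heq
  simp only [Fin.sum_univ_two] at hre him h
  simp [Complex.add_re, Complex.add_im, Complex.sub_re, Complex.sub_im,
    Complex.mul_re, Complex.mul_im, pow_two] at hre him
  rw [hγ10] at hre him
  set a0 := (ξ 0).re with ha0
  set a1 := (ξ 1).re with ha1
  set b0 := (ξ 0).im with hb0
  set b1 := (ξ 1).im with hb1
  have hna : (0:ℝ) ≤ a0^2 + a1^2 := by positivity
  have hnb : (0:ℝ) ≤ b0^2 + b1^2 := by positivity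
  have hPa := hell' a0 a1
  have hPb := hell' b0 b1
  -- imaginary part identity
  have hIm2 : (-(4*α))*η.re = 2*((β 0 * a0 + β 1 * a1)*(β 0 * b0 + β 1 * b1))
      + 2*((-(4*α))*(γ 0 0*(a0*b0) + γ 0 1*(a0*b1) + γ 0 1*(a1*b0) + γ 1 1*(a1*b1))) := by
    linear_combination (-1 : ℝ) * him
  -- quadratic form lower bound in b
  have hQbLow : -((|γ 0 0| + 2*|γ 0 1| + |γ 1 1|)*(b0^2+b1^2)) ≤
      γ 0 0*(b0*b0) + γ 0 1*(b0*b1) + γ 0 1*(b1*b0) + γ 1 1*(b1*b1) := by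
    linarith [(two_mul_abs_bound (γ 0 1) b0 b1).2,
      mul_le_mul_of_nonneg_right (neg_abs_le (γ 0 0)) (sq_nonneg b0),
      mul_le_mul_of_nonneg_right (neg_abs_le (γ 1 1)) (sq_nonneg b1),
      mul_nonneg hg0 (sq_nonneg b1), mul_nonneg hg2 (sq_nonneg b0),
      mul_nonneg hg1 hnb]
  -- lower bound on -(4α)·Im η coming from the real part and r ≥ 0
  have hlow : c*(a0^2+a1^2)
      - (-(4*α))*((|γ 0 0| + 2*|γ 0 1| + |γ 1 1|)*(b0^2+b1^2)) ≤ (-(4*α))*η.im := by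
    linarith [hre, hr, hPa, sq_nonneg (β 0 * b0 + β 1 * b1),
      mul_le_mul_of_nonneg_left hQbLow hA4.le]
  -- Cauchy–Schwarz bounds
  have hSAb : (β 0 * a0 + β 1 * a1)^2 ≤ ((β 0)^2+(β 1)^2)*(a0^2+a1^2) := by
    linarith [sq_nonneg (β 0 * a1 - β 1 * a0)]
  have hSBb : (β 0 * b0 + β 1 * b1)^2 ≤ ((β 0)^2+(β 1)^2)*(b0^2+b1^2) := by
    linarith [sq_nonneg (β 0 * b1 - β 1 * b0)]
  -- mixed quadratic form bounds
  have h2QABu : 2*(γ 0 0*(a0*b0) + γ 0 1*(a0*b1) + γ 0 1*(a1*b0) + γ 1 1*(a1*b1)) ≤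
      (|γ 0 0| + 2*|γ 0 1| + |γ 1 1|)*((a0^2+a1^2)+(b0^2+b1^2)) := by
    linarith [(two_mul_abs_bound (γ 0 0) a0 b0).1, (two_mul_abs_bound (γ 0 1) a0 b1).1,
      (two_mul_abs_bound (γ 0 1) a1 b0).1, (two_mul_abs_bound (γ 1 1) a1 b1).1,
      mul_nonneg hg0 (sq_nonneg a1), mul_nonneg hg0 (sq_nonneg b1),
      mul_nonneg hg2 (sq_nonneg a0), mul_nonneg hg2 (sq_nonneg b0),
      mul_nonneg hg1 (add_nonneg hna hnb)]
  have h2QABl : -((|γ 0 0| + 2*|γ 0 1| + |γ 1 1|)*((a0^2+a1^2)+(b0^2+b1^2))) ≤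
      2*(γ 0 0*(a0*b0) + γ 0 1*(a0*b1) + γ 0 1*(a1*b0) + γ 1 1*(a1*b1)) := by
    linarith [(two_mul_abs_bound (γ 0 0) a0 b0).2, (two_mul_abs_bound (γ 0 1) a0 b1).2,
      (two_mul_abs_bound (γ 0 1) a1 b0).2, (two_mul_abs_bound (γ 1 1) a1 b1).2,
      mul_nonneg hg0 (sq_nonneg a1), mul_nonneg hg0 (sq_nonneg b1),
      mul_nonneg hg2 (sq_nonneg a0), mul_nonneg hg2 (sq_nonneg b0),
      mul_nonneg hg1 (add_nonneg hna hnb)]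
  -- bound on -(4α)·|Re η|
  have hub : 2*((β 0 * a0 + β 1 * a1)*(β 0 * b0 + β 1 * b1))
      + 2*((-(4*α))*(γ 0 0*(a0*b0) + γ 0 1*(a0*b1) + γ 0 1*(a1*b0) + γ 1 1*(a1*b1))) ≤
      ((β 0)^2 + (β 1)^2 + (-(4*α))*(|γ 0 0| + 2*|γ 0 1| + |γ 1 1| + 1))
        *((a0^2+a1^2)+(b0^2+b1^2)) := by
    linarith [sq_nonneg ((β 0 * a0 + β 1 * a1) - (β 0 * b0 + β 1 * b1)), hSAb, hSBb,
      mul_le_mul_of_nonneg_left h2QABu hA4.le,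
      mul_nonneg hA4.le (add_nonneg hna hnb)]
  have hlb : -(((β 0)^2 + (β 1)^2 + (-(4*α))*(|γ 0 0| + 2*|γ 0 1| + |γ 1 1| + 1))
        *((a0^2+a1^2)+(b0^2+b1^2))) ≤
      2*((β 0 * a0 + β 1 * a1)*(β 0 * b0 + β 1 * b1))
      + 2*((-(4*α))*(γ 0 0*(a0*b0) + γ 0 1*(a0*b1) + γ 0 1*(a1*b0) + γ 1 1*(a1*b1))) := by
    linarith [sq_nonneg ((β 0 * a0 + β 1 * a1) + (β 0 * b0 + β 1 * b1)), hSAb, hSBb,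
      mul_le_mul_of_nonneg_left h2QABl hA4.le,
      mul_nonneg hA4.le (add_nonneg hna hnb)]
  have habs : (-(4*α))*|η.re| ≤
      ((β 0)^2 + (β 1)^2 + (-(4*α))*(|γ 0 0| + 2*|γ 0 1| + |γ 1 1| + 1))
        *((a0^2+a1^2)+(b0^2+b1^2)) := by
    have h1 : |(-(4*α))*η.re| = (-(4*α))*|η.re| := by
      rw [_root_.abs_mul, _root_.abs_of_nonneg hA4.le]
    rw [← h1]
    exact abs_le.mpr ⟨by rw [hIm2]; exact hlb, by rw [hIm2]; exact hub⟩
  -- multiply the region hypothesis by -(4α) > 0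
  have hmul := mul_lt_mul_of_pos_left h hA4
  -- μ times the |Re η| bound
  have hμabs := mul_le_mul_of_nonneg_left habs hμpos.le
  -- coefficient facts
  have hX : 0 ≤ c - μ*((β 0)^2 + (β 1)^2
      + (-(4*α))*(|γ 0 0| + 2*|γ 0 1| + |γ 1 1| + 1)) - (-(4*α))*μ := by linarith [hμ2]
  have hcoef2 : (-(4*α))*(|γ 0 0| + 2*|γ 0 1| + |γ 1 1| + 1)
      + ((β 0)^2 + (β 1)^2 + (-(4*α))*(|γ 0 0| + 2*|γ 0 1| + |γ 1 1| + 1))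
      ≤ μ⁻¹*(-(4*α)) := by
    have h' := mul_le_mul_of_nonneg_left hμ3 (inv_nonneg.2 hμpos.le)
    rwa [← mul_assoc, inv_mul_cancel₀ hμpos.ne', one_mul] at h'
  have hY : 0 ≤ (-(4*α))*μ⁻¹ - (-(4*α))*(|γ 0 0| + 2*|γ 0 1| + |γ 1 1|)
      - μ*((β 0)^2 + (β 1)^2 + (-(4*α))*(|γ 0 0| + 2*|γ 0 1| + |γ 1 1| + 1)) := by
    linarith [hcoef2, mul_le_mul_of_nonneg_right hμ1 hDpos.le, hA4]
  linarith [hmul, hlow, hμabs, mul_nonneg hX hna, mul_nonneg hY hnb]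
end

section
/- (Duality identity for the interior transmission problem) Let D ⊂ ℝ³ be a bounded C^∞ domain, k > 0, and 0 < s < t < T. Suppose (v,u) is a sufficiently regular solution on D×(s,T) of ∂_τ v = Δv, ∂_τ u = kΔu with transmission boundary conditions v − u = 0 and ∂_ν v − k∂_ν u = 0 on ∂D×(s,T), and (w,z) is a sufficiently regular solution on D×(0,t) of −∂_τ w = Δw, −∂_τ z = kΔz with w + z = 0 and ∂_ν w + k∂_ν z = 0 on ∂D×(0,t). Then the quantity ∫_D (v(·,τ)w(·,τ) + u(·,τ)z(·,τ)) dx is constant in τ ∈ (s,t); in particular ∫_D (vw + uz)(·,t) dx = ∫_D (vw + uz)(·,s) dx. -/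
noncomputable section
open MeasureTheory Real

abbrev E3 := EuclideanSpace ℝ (Fin 3)

/-- First partial derivative in the `i`-th coordinate direction. -/
def pd (f : E3 → ℝ) (i : Fin 3) (x : E3) : ℝ :=
  deriv (fun h : ℝ => f (x + h • (EuclideanSpace.single i (1 : ℝ)))) 0

/-- Laplacian as the sum of the second coordinate partial derivatives. -/
def lap (f : E3 → ℝ) (x : E3) : ℝ :=
  ∑ i : Fin 3, pd (fun y => pd f i y) i x

/-- Duality identity for the interior transmission problem: if `(v,u)` solves the
forward transmission system on `D×(s,T)` and `(w,z)` solves the adjoint system on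
`D×(0,t)` (with the adjoint transmission conditions), and Green's second identity
and differentiation under the integral sign are available, then
`F(τ) = ∫_D (vw + uz) dx` is constant on `(s,t)`, and in particular `F t = F s`. -/
theorem duality_identity_ITP
    (D : Set E3) (hD : MeasurableSet D)
    (T k s t : ℝ) (hk : 0 < k) (hs : 0 < s) (hst : s < t) (htT : t < T)
    (σb : Measure E3)  -- surface measure on ∂D
    (v u w z dνv dνu dνw dνz : E3 → ℝ → ℝ)
    -- the forward equations on D×(s,T)
    (hv : ∀ τ ∈ Set.Ioo s T, ∀ x ∈ D, deriv (v x) τ = lap (fun x' => v x' τ) x)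
    (hu : ∀ τ ∈ Set.Ioo s T, ∀ x ∈ D, deriv (u x) τ = k * lap (fun x' => u x' τ) x)
    -- the backward (adjoint) equations on D×(0,t)
    (hw : ∀ τ ∈ Set.Ioo 0 t, ∀ x ∈ D, -deriv (w x) τ = lap (fun x' => w x' τ) x)
    (hz : ∀ τ ∈ Set.Ioo 0 t, ∀ x ∈ D, -deriv (z x) τ = k * lap (fun x' => z x' τ) x)
    -- transmission boundary conditions
    (hbc₁ : ∀ τ ∈ Set.Ioo s T, ∀ x ∈ frontier D,
      v x τ - u x τ = 0 ∧ dνv x τ - k * dνu x τ = 0)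
    (hbc₂ : ∀ τ ∈ Set.Ioo 0 t, ∀ x ∈ frontier D,
      w x τ + z x τ = 0 ∧ dνw x τ + k * dνz x τ = 0)
    -- time regularity of the solutions
    (hdiff : ∀ x ∈ D, ∀ τ ∈ Set.Ioo s t,
      DifferentiableAt ℝ (v x) τ ∧ DifferentiableAt ℝ (u x) τ ∧
      DifferentiableAt ℝ (w x) τ ∧ DifferentiableAt ℝ (z x) τ)
    -- integrability needed to split the volume integrals
    (hInt₁ : ∀ τ ∈ Set.Ioo s t, IntegrableOn
      (fun x => w x τ * lap (fun x' => v x' τ) x - v x τ * lap (fun x' => w x' τ) x) D)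
    (hInt₂ : ∀ τ ∈ Set.Ioo s t, IntegrableOn
      (fun x => z x τ * lap (fun x' => u x' τ) x - u x τ * lap (fun x' => z x' τ) x) D)
    -- Green's second identity for the pairs (v,w) and (u,z)
    (hGreen₁ : ∀ τ ∈ Set.Ioo s t,
      (∫ x in D, (w x τ * lap (fun x' => v x' τ) x - v x τ * lap (fun x' => w x' τ) x))
        = ∫ x in frontier D, (w x τ * dνv x τ - v x τ * dνw x τ) ∂σb)
    (hGreen₂ : ∀ τ ∈ Set.Ioo s t,
      (∫ x in D, (z x τ * lap (fun x' => u x' τ) x - u x τ * lap (fun x' => z x' τ) x))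
        = ∫ x in frontier D, (z x τ * dνu x τ - u x τ * dνz x τ) ∂σb)
    (F : ℝ → ℝ)
    (hF : F = fun τ => ∫ x in D, (v x τ * w x τ + u x τ * z x τ))
    -- differentiation under the integral sign
    (hFderiv : ∀ τ ∈ Set.Ioo s t, HasDerivAt F
      (∫ x in D, deriv (fun τ' => v x τ' * w x τ' + u x τ' * z x τ') τ) τ)
    (hFcont : ContinuousOn F (Set.Icc s t)) :
    (∀ τ₁ ∈ Set.Ioo s t, ∀ τ₂ ∈ Set.Ioo s t, F τ₁ = F τ₂) ∧ F t = F s := by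
  have hDfr : MeasurableSet (frontier D) := isClosed_frontier.measurableSet
  -- F has zero derivative on (s,t)
  have hzero : ∀ τ ∈ Set.Ioo s t, HasDerivAt F 0 τ := by
    intro τ hτ
    obtain ⟨hτs, hτt⟩ := hτ
    have hτsT : τ ∈ Set.Ioo s T := ⟨hτs, hτt.trans htT⟩
    have hτ0t : τ ∈ Set.Ioo 0 t := ⟨hs.trans hτs, hτt⟩
    have key : (∫ x in D, deriv (fun τ' => v x τ' * w x τ' + u x τ' * z x τ') τ) = 0 := by
      have h1 : ∀ x ∈ D, deriv (fun τ' => v x τ' * w x τ' + u x τ' * z x τ') τ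
          = (w x τ * lap (fun x' => v x' τ) x - v x τ * lap (fun x' => w x' τ) x)
            + k * (z x τ * lap (fun x' => u x' τ) x - u x τ * lap (fun x' => z x' τ) x) := by
        intro x hx
        obtain ⟨hvd, hud, hwd, hzd⟩ := hdiff x hx τ ⟨hτs, hτt⟩
        have hd : deriv (fun τ' => v x τ' * w x τ' + u x τ' * z x τ') τ
            = deriv (v x) τ * w x τ + v x τ * deriv (w x) τ
              + (deriv (u x) τ * z x τ + u x τ * deriv (z x) τ) :=
          ((hvd.hasDerivAt.mul hwd.hasDerivAt).add
            (hud.hasDerivAt.mul hzd.hasDerivAt)).deriv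
        have hw' : deriv (w x) τ = -(lap (fun x' => w x' τ) x) := by
          have := hw τ hτ0t x hx; linarith
        have hz' : deriv (z x) τ = -(k * lap (fun x' => z x' τ) x) := by
          have := hz τ hτ0t x hx; linarith
        rw [hd, hv τ hτsT x hx, hu τ hτsT x hx, hw', hz']
        ring
      calc (∫ x in D, deriv (fun τ' => v x τ' * w x τ' + u x τ' * z x τ') τ)
          = ∫ x in D,
              ((w x τ * lap (fun x' => v x' τ) x - v x τ * lap (fun x' => w x' τ) x)
                + k * (z x τ * lap (fun x' => u x' τ) x - u x τ * lap (fun x' => z x' τ) x)) :=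
            setIntegral_congr_fun hD h1
        _ = (∫ x in D, (w x τ * lap (fun x' => v x' τ) x - v x τ * lap (fun x' => w x' τ) x))
              + k * ∫ x in D, (z x τ * lap (fun x' => u x' τ) x
                - u x τ * lap (fun x' => z x' τ) x) := by
            rw [integral_add (hInt₁ τ ⟨hτs, hτt⟩) ((hInt₂ τ ⟨hτs, hτt⟩).const_mul k),
              integral_const_mul]
        _ = (∫ x in frontier D, (w x τ * dνv x τ - v x τ * dνw x τ) ∂σb)
              + k * ∫ x in frontier D, (z x τ * dνu x τ - u x τ * dνz x τ) ∂σb := by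
            rw [hGreen₁ τ ⟨hτs, hτt⟩, hGreen₂ τ ⟨hτs, hτt⟩]
        _ = 0 := by
            have hb : ∀ x ∈ frontier D, (w x τ * dνv x τ - v x τ * dνw x τ)
                = -(k * (z x τ * dνu x τ - u x τ * dνz x τ)) := by
              intro x hx
              obtain ⟨e1, e2⟩ := hbc₁ τ hτsT x hx
              obtain ⟨e3, e4⟩ := hbc₂ τ hτ0t x hx
              have hv' : v x τ = u x τ := by linarith
              have hdv : dνv x τ = k * dνu x τ := by linarith
              have hw2 : w x τ = -z x τ := by linarith
              have hdw : dνw x τ = -(k * dνz x τ) := by linarith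
              rw [hv', hdv, hw2, hdw]; ring
            rw [setIntegral_congr_fun hDfr hb, integral_neg, integral_const_mul]
            ring
    have h := hFderiv τ ⟨hτs, hτt⟩
    rwa [key] at h
  -- F is constant on (s,t)
  have hconst : ∀ τ₁ ∈ Set.Ioo s t, ∀ τ₂ ∈ Set.Ioo s t, τ₁ ≤ τ₂ → F τ₁ = F τ₂ := by
    intro τ₁ h₁ τ₂ h₂ hle
    have hcont : ContinuousOn F (Set.Icc τ₁ τ₂) :=
      hFcont.mono (Set.Icc_subset_Icc h₁.1.le h₂.2.le)
    have hder : ∀ x ∈ Set.Ico τ₁ τ₂, HasDerivWithinAt F 0 (Set.Ici x) x := by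
      intro x hx
      exact (hzero x ⟨h₁.1.trans_le hx.1, hx.2.trans h₂.2⟩).hasDerivWithinAt
    exact (constant_of_has_deriv_right_zero hcont hder τ₂
      ⟨hle, le_refl τ₂⟩).symm ▸ rfl
  have hcF : ∀ τ₁ ∈ Set.Ioo s t, ∀ τ₂ ∈ Set.Ioo s t, F τ₁ = F τ₂ := by
    intro τ₁ h₁ τ₂ h₂
    rcases le_total τ₁ τ₂ with h | h
    · exact (hconst τ₁ h₁ τ₂ h₂ h)
    · exact (hconst τ₂ h₂ τ₁ h₁ h).symm
  refine ⟨hcF, ?_⟩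
  have hmid : (s + t) / 2 ∈ Set.Ioo s t := ⟨by linarith, by linarith⟩
  have hlim : ∀ a ∈ Set.Icc s t, F a = F ((s + t) / 2) := by
    intro a ha
    have hac : a ∈ closure (Set.Ioo s t) := by
      rw [closure_Ioo hst.ne]; exact ha
    haveI : Filter.NeBot (nhdsWithin a (Set.Ioo s t)) :=
      mem_closure_iff_nhdsWithin_neBot.mp hac
    have h1 : Filter.Tendsto F (nhdsWithin a (Set.Ioo s t)) (nhds (F a)) :=
      (hFcont a ha).mono Set.Ioo_subset_Icc_self
    have h2 : Filter.Tendsto F (nhdsWithin a (Set.Ioo s t)) (nhds (F ((s + t) / 2))) := by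
      refine Filter.Tendsto.congr' ?_ tendsto_const_nhds
      filter_upwards [self_mem_nhdsWithin] with x hx
      exact (hcF ((s + t) / 2) hmid x hx)
    exact tendsto_nhds_unique h1 h2
  rw [hlim t ⟨hst.le, le_refl t⟩, hlim s ⟨le_refl s, hst.le⟩]
end
end
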